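/- Construction C: let S₁, S₂ ⊆ F₂ ⊕ F₄^m be disjoint sets such that wt(y+z) is odd for y ∈ S₁, z ∈ S₂, and wt(y+z) is even for y, z in the same S_i. Let ξ₁,ξ₂,ξ₃,ξ₄ be the four distinct elements of F₄ and δ = [1,0,...,0] ∈ F₂ ⊕ F₄^{m+1}. Define S̃₁ = {[y,ξ₁] : y ∈ S₁}, S̃₂ = {[y,ξ₂] : y ∈ S₁}, S̃₃ = {[y,ξ₃]+δ : y ∈ S₂}, S̃₄ = {[y,ξ₄]+δ : y ∈ S₂}. Then the S̃_i are pairwise disjoint and wt(y+z) is odd whenever y ∈ S̃_i, z ∈ S̃_j with i ≠ j. -/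

import Mathlib

def add4 : Fin 4 → Fin 4 → Fin 4 :=
  ![![0, 1, 2, 3], ![1, 0, 3, 2], ![2, 3, 0, 1], ![3, 2, 1, 0]]

def addV {m : ℕ} (p q : ZMod 2 × (Fin m → Fin 4)) : ZMod 2 × (Fin m → Fin 4) :=
  (p.1 + q.1, fun k => add4 (p.2 k) (q.2 k))

def wtV {m : ℕ} (p : ZMod 2 × (Fin m → Fin 4)) : ℕ :=
  (if p.1 ≠ 0 then 1 else 0) + (Finset.univ.filter fun k => p.2 k ≠ 0).card

def app {m : ℕ} (y : ZMod 2 × (Fin m → Fin 4)) (ξ : Fin 4) :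
    ZMod 2 × (Fin (m + 1) → Fin 4) :=
  (y.1, Fin.snoc y.2 ξ)

def deltaV (m : ℕ) : ZMod 2 × (Fin m → Fin 4) := ((1 : ZMod 2), fun _ => 0)

/-!
Appending a coordinate `ξ i` to a word and then adding two such words with different appended
symbols contributes exactly one extra nonzero coordinate. So it suffices that the sum of any two
words of `S₁ ∪ (S₂ + δ)` has even weight: this holds inside `S₁` and, since `δ + δ = 0`, inside
`S₂ + δ`; across the two parts it holds because adding `δ` flips the first coordinate and hence
the parity of an odd weight. The last coordinate alone already separates the four sets.
-/

lemma add4_comm (a b : Fin 4) : add4 a b = add4 b a := by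
  revert a b; decide

@[simp]
lemma add4_zero (a : Fin 4) : add4 a 0 = a := by
  revert a; decide

lemma add4_eq_zero_iff {a b : Fin 4} : add4 a b = 0 ↔ a = b := by
  revert a b; decide

section

variable {m : ℕ}

lemma addV_comm (p q : ZMod 2 × (Fin m → Fin 4)) : addV p q = addV q p :=
  Prod.ext (add_comm _ _) (funext fun _ => add4_comm _ _)

lemma addV_deltaV (p : ZMod 2 × (Fin m → Fin 4)) : addV p (deltaV m) = (p.1 + 1, p.2) :=
  Prod.ext rfl (funext fun _ => add4_zero _)

lemma addV_deltaV_left (p q : ZMod 2 × (Fin m → Fin 4)) :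
    addV (addV p (deltaV m)) q = addV (addV p q) (deltaV m) := by
  rw [addV_deltaV, addV_deltaV]
  exact Prod.ext (add_right_comm _ _ _) rfl

lemma addV_deltaV_addV_deltaV (p q : ZMod 2 × (Fin m → Fin 4)) :
    addV (addV p (deltaV m)) (addV q (deltaV m)) = addV p q := by
  have hchar : ∀ a b : ZMod 2, a + 1 + (b + 1) = a + b := by decide
  rw [addV_deltaV, addV_deltaV]
  exact Prod.ext (hchar _ _) rfl

lemma even_wtV_addV_deltaV_iff (p : ZMod 2 × (Fin m → Fin 4)) :
    Even (wtV (addV p (deltaV m))) ↔ Odd (wtV p) := by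
  have hfst : ∀ c : ZMod 2, ((if c + 1 ≠ 0 then 1 else 0) + if c ≠ 0 then 1 else 0) = 1 := by
    decide
  have hsum := hfst p.1
  rw [addV_deltaV, wtV, wtV, Nat.even_iff, Nat.odd_iff]
  dsimp only
  omega

lemma addV_app (y z : ZMod 2 × (Fin m → Fin 4)) (a b : Fin 4) :
    addV (app y a) (app z b) = app (addV y z) (add4 a b) := by
  refine Prod.ext rfl (funext fun k => ?_)
  refine Fin.lastCases ?_ (fun i => ?_) k <;> simp [addV, app]

lemma addV_app_deltaV (y : ZMod 2 × (Fin m → Fin 4)) (a : Fin 4) :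
    addV (app y a) (deltaV (m + 1)) = app (addV y (deltaV m)) a := by
  refine Prod.ext rfl (funext fun k => ?_)
  refine Fin.lastCases ?_ (fun i => ?_) k <;> simp [addV, app, deltaV]

@[simp]
lemma app_snd_last (y : ZMod 2 × (Fin m → Fin 4)) (a : Fin 4) : (app y a).2 (Fin.last m) = a := by
  simp [app]

lemma wtV_app (p : ZMod 2 × (Fin m → Fin 4)) (a : Fin 4) :
    wtV (app p a) = wtV p + if a ≠ 0 then 1 else 0 := by
  unfold wtV app
  simp only [Finset.card_filter]
  rw [Fin.sum_univ_castSucc]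
  simp only [Fin.snoc_castSucc, Fin.snoc_last]
  omega

lemma odd_wtV_addV_app {y z : ZMod 2 × (Fin m → Fin 4)} {a b : Fin 4}
    (hyz : Even (wtV (addV y z))) (hab : a ≠ b) : Odd (wtV (addV (app y a) (app z b))) := by
  rw [addV_app, wtV_app, if_pos (add4_eq_zero_iff.not.2 hab)]
  exact hyz.add_one

lemma even_wtV_addV_of_mem_union_deltaV {S₁ S₂ : Set (ZMod 2 × (Fin m → Fin 4))}
    (hodd : ∀ y ∈ S₁, ∀ z ∈ S₂, Odd (wtV (addV y z)))
    (heven₁ : ∀ y ∈ S₁, ∀ z ∈ S₁, Even (wtV (addV y z)))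
    (heven₂ : ∀ y ∈ S₂, ∀ z ∈ S₂, Even (wtV (addV y z))) :
    ∀ u ∈ S₁ ∪ (addV · (deltaV m)) '' S₂, ∀ v ∈ S₁ ∪ (addV · (deltaV m)) '' S₂,
      Even (wtV (addV u v)) := by
  rintro u (hu | ⟨y, hy, rfl⟩) v (hv | ⟨z, hz, rfl⟩)
  · exact heven₁ u hu v hv
  · rw [addV_comm u, addV_deltaV_left, addV_comm z, even_wtV_addV_deltaV_iff]
    exact hodd u hu z hz
  · rw [addV_deltaV_left, addV_comm y, even_wtV_addV_deltaV_iff]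
    exact hodd v hv y hy
  · rw [addV_deltaV_addV_deltaV]
    exact heven₂ y hy z hz

end

theorem constructionC_general (m : ℕ) (ξ : Fin 4 → Fin 4) (hξ : Function.Injective ξ)
    (S₁ S₂ : Set (ZMod 2 × (Fin m → Fin 4)))
    (hodd : ∀ y ∈ S₁, ∀ z ∈ S₂, Odd (wtV (addV y z)))
    (heven₁ : ∀ y ∈ S₁, ∀ z ∈ S₁, Even (wtV (addV y z)))
    (heven₂ : ∀ y ∈ S₂, ∀ z ∈ S₂, Even (wtV (addV y z))) :
    let T : Fin 4 → Set (ZMod 2 × (Fin (m + 1) → Fin 4)) :=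
      ![(fun y => app y (ξ 0)) '' S₁,
        (fun y => app y (ξ 1)) '' S₁,
        (fun y => addV (app y (ξ 2)) (deltaV (m + 1))) '' S₂,
        (fun y => addV (app y (ξ 3)) (deltaV (m + 1))) '' S₂]
    (∀ i j, i ≠ j → Disjoint (T i) (T j)) ∧
    (∀ i j, i ≠ j → ∀ y ∈ T i, ∀ z ∈ T j, Odd (wtV (addV y z))) := by
  intro T
  set E := S₁ ∪ (addV · (deltaV m)) '' S₂
  have hE := even_wtV_addV_of_mem_union_deltaV hodd heven₁ heven₂
  have hT : ∀ i, ∀ x ∈ T i, ∃ u ∈ E, app u (ξ i) = x := by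
    intro i x hx
    fin_cases i <;> obtain ⟨y, hy, rfl⟩ := hx
    · exact ⟨y, .inl hy, rfl⟩
    · exact ⟨y, .inl hy, rfl⟩
    · exact ⟨_, .inr ⟨y, hy, rfl⟩, (addV_app_deltaV y _).symm⟩
    · exact ⟨_, .inr ⟨y, hy, rfl⟩, (addV_app_deltaV y _).symm⟩
  refine ⟨fun i j hij => Set.disjoint_left.2 ?_, fun i j hij => ?_⟩
  · intro x hxi hxj
    obtain ⟨u, -, rfl⟩ := hT i x hxi
    obtain ⟨v, -, hv⟩ := hT j _ hxj
    exact hij (hξ (by simpa using congrArg (·.2 (Fin.last m)) hv.symm))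
  · rintro _ hx _ hy
    obtain ⟨u, hu, rfl⟩ := hT i _ hx
    obtain ⟨v, hv, rfl⟩ := hT j _ hy
    exact odd_wtV_addV_app (hE u hu v hv) (hξ.ne hij)

/-- Construction C: from a 2-group decodable design {S₁,S₂} build the 4-group
decodable design S̃₁ = {[y,ξ₁]}, S̃₂ = {[y,ξ₂]} (y ∈ S₁),
S̃₃ = {[y,ξ₃]+δ}, S̃₄ = {[y,ξ₄]+δ} (y ∈ S₂), with ξ₁,ξ₂,ξ₃,ξ₄ the four
distinct elements of F₄. -/
theorem constructionC (m : ℕ) (ξ : Fin 4 → Fin 4) (hξ : Function.Injective ξ)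
    (S₁ S₂ : Set (ZMod 2 × (Fin m → Fin 4)))
    (hdisj : Disjoint S₁ S₂)
    (hodd : ∀ y ∈ S₁, ∀ z ∈ S₂, Odd (wtV (addV y z)))
    (heven₁ : ∀ y ∈ S₁, ∀ z ∈ S₁, Even (wtV (addV y z)))
    (heven₂ : ∀ y ∈ S₂, ∀ z ∈ S₂, Even (wtV (addV y z))) :
    let T : Fin 4 → Set (ZMod 2 × (Fin (m + 1) → Fin 4)) :=
      ![(fun y => app y (ξ 0)) '' S₁,
        (fun y => app y (ξ 1)) '' S₁,
        (fun y => addV (app y (ξ 2)) (deltaV (m + 1))) '' S₂,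
        (fun y => addV (app y (ξ 3)) (deltaV (m + 1))) '' S₂]
    (∀ i j, i ≠ j → Disjoint (T i) (T j)) ∧
    (∀ i j, i ≠ j → ∀ y ∈ T i, ∀ z ∈ T j, Odd (wtV (addV y z))) :=
  constructionC_general m ξ hξ S₁ S₂ hodd heven₁ heven₂
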